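/- arXiv:math/0402408 — 3 statements merged into one kernel-verified Lean document; each statement's English description precedes it below -/
import Mathlib

section
/- Let g : ℝ² → ℝ and h : ℝ³ → ℝ be smooth bounded functions, each 1-periodic in their last argument, and let ε > 0. Then the vector field u(t,x) = (g(x₂, x₂/ε), 0, h(x₁ − g(x₂, x₂/ε)·t, x₂, x₂/ε)) together with the constant pressure p = 0 is an exact smooth solution of the incompressible Euler equations on ℝ × ℝ³: ∂ₜu + (u·∇)u + ∇p = 0 and div u = 0. -/
/-- DiPerna–Majda shear-layer oscillations are exact solutions of the 3-D
incompressible Euler equations (with pressure `p = 0`). -/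
theorem stmt_0 (g : ℝ × ℝ → ℝ) (h : ℝ × ℝ × ℝ → ℝ) (ε : ℝ) (hε : 0 < ε)
    (hg : ContDiff ℝ (⊤ : ℕ∞) g) (hh : ContDiff ℝ (⊤ : ℕ∞) h)
    (hgb : ∃ C, ∀ y, |g y| ≤ C) (hhb : ∃ C, ∀ y, |h y| ≤ C)
    (hgper : ∀ a θ, g (a, θ + 1) = g (a, θ))
    (hhper : ∀ a b θ, h (a, b, θ + 1) = h (a, b, θ))
    (u : ℝ → (Fin 3 → ℝ) → Fin 3 → ℝ)
    (hu : ∀ t x, u t x =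
      ![g (x 1, x 1 / ε), 0, h (x 0 - g (x 1, x 1 / ε) * t, x 1, x 1 / ε)])
    (p : ℝ → (Fin 3 → ℝ) → ℝ) (hp : ∀ t x, p t x = 0) :
    (∀ t x i,
        deriv (fun s => u s x i) t
          + ∑ j, u t x j * fderiv ℝ (fun y => u t y i) x (Pi.single j 1)
          + fderiv ℝ (p t) x (Pi.single i 1) = 0) ∧
    (∀ t x, ∑ j, fderiv ℝ (fun y => u t y j) x (Pi.single j 1) = 0) := by
  have hgd : Differentiable ℝ g := hg.differentiable (by simp)
  have hhd : Differentiable ℝ h := hh.differentiable (by simp)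
  have hu0 : ∀ t, (fun y : Fin 3 → ℝ => u t y 0) = fun y => g (y 1, y 1 / ε) := by
    intro t; funext y; rw [hu]; simp
  have hu1 : ∀ t, (fun y : Fin 3 → ℝ => u t y 1) = fun _ => (0 : ℝ) := by
    intro t; funext y; rw [hu]; simp
  have hu2 : ∀ t, (fun y : Fin 3 → ℝ => u t y 2) =
      fun y => h (y 0 - g (y 1, y 1 / ε) * t, y 1, y 1 / ε) := by
    intro t; funext y; rw [hu]; simp
  have hval : ∀ t x, u t x 0 = g (x 1, x 1 / ε) ∧ u t x 1 = 0 ∧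
      u t x 2 = h (x 0 - g (x 1, x 1 / ε) * t, x 1, x 1 / ε) := by
    intro t x; rw [hu]; refine ⟨rfl, rfl, rfl⟩
  set Lp0 : (Fin 3 → ℝ) →L[ℝ] ℝ := ContinuousLinearMap.proj 0 with hLp0
  set Lp1 : (Fin 3 → ℝ) →L[ℝ] ℝ := ContinuousLinearMap.proj 1 with hLp1
  have h1 : ∀ x : Fin 3 → ℝ, HasFDerivAt (fun y : Fin 3 → ℝ => y 1) Lp1 x :=
    fun x => Lp1.hasFDerivAt
  have h2 : ∀ x : Fin 3 → ℝ, HasFDerivAt (fun y : Fin 3 → ℝ => y 1 / ε) (ε⁻¹ • Lp1) x := by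
    intro x
    simpa [div_eq_mul_inv] using (h1 x).mul_const ε⁻¹
  have hG : ∀ x : Fin 3 → ℝ, HasFDerivAt (fun y : Fin 3 → ℝ => g (y 1, y 1 / ε))
      ((fderiv ℝ g (x 1, x 1 / ε)).comp (Lp1.prod (ε⁻¹ • Lp1))) x := by
    intro x
    exact (hgd (x 1, x 1 / ε)).hasFDerivAt.comp x ((h1 x).prodMk (h2 x))
  have hF2 : ∀ t (x : Fin 3 → ℝ), HasFDerivAt
      (fun y : Fin 3 → ℝ => h (y 0 - g (y 1, y 1 / ε) * t, y 1, y 1 / ε))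
      ((fderiv ℝ h (x 0 - g (x 1, x 1 / ε) * t, x 1, x 1 / ε)).comp
        (((Lp0 - t • ((fderiv ℝ g (x 1, x 1 / ε)).comp (Lp1.prod (ε⁻¹ • Lp1))))).prod
          (Lp1.prod (ε⁻¹ • Lp1)))) x := by
    intro t x
    exact (hhd _).hasFDerivAt.comp x
      ((Lp0.hasFDerivAt.sub ((hG x).mul_const t)).prodMk ((h1 x).prodMk (h2 x)))
  have hDg0 : ∀ x : Fin 3 → ℝ, fderiv ℝ g (x 1, x 1 / ε) ((0 : ℝ), (0 : ℝ)) = 0 := by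
    intro x
    rw [show (((0 : ℝ), (0 : ℝ)) : ℝ × ℝ) = 0 from rfl, map_zero]
  have hpz : ∀ t (x : Fin 3 → ℝ), fderiv ℝ (p t) x = 0 := by
    intro t x
    have : p t = fun _ => (0 : ℝ) := funext (hp t)
    rw [this]; exact fderiv_const_apply 0
  constructor
  · intro t x i
    obtain ⟨hv0, hv1, hv2⟩ := hval t x
    have case0 : deriv (fun s => u s x 0) t
        + ∑ j, u t x j * fderiv ℝ (fun y => u t y 0) x (Pi.single j 1)
        + fderiv ℝ (p t) x (Pi.single (0 : Fin 3) 1) = 0 := by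
      have hc : (fun s => u s x 0) = fun _ => g (x 1, x 1 / ε) := by
        funext s; rw [hu]; simp
      rw [hpz, Fin.sum_univ_three, hv0, hv1, hv2, hu0, hc, deriv_const, (hG x).fderiv]
      simp [hLp1, Pi.single_apply, hDg0 x]
    have case1 : deriv (fun s => u s x 1) t
        + ∑ j, u t x j * fderiv ℝ (fun y => u t y 1) x (Pi.single j 1)
        + fderiv ℝ (p t) x (Pi.single (1 : Fin 3) 1) = 0 := by
      have hc : (fun s => u s x 1) = fun _ => (0 : ℝ) := by
        funext s; rw [hu]; simp
      rw [hpz, Fin.sum_univ_three, hv0, hv1, hv2, hu1, hc, deriv_const, fderiv_fun_const]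
      simp
    have case2 : deriv (fun s => u s x 2) t
        + ∑ j, u t x j * fderiv ℝ (fun y => u t y 2) x (Pi.single j 1)
        + fderiv ℝ (p t) x (Pi.single (2 : Fin 3) 1) = 0 := by
      have hc : (fun s => u s x 2) =
          fun s => h (x 0 - g (x 1, x 1 / ε) * s, x 1, x 1 / ε) := by
        funext s; rw [hu]; simp
      have hd : HasDerivAt (fun s => h (x 0 - g (x 1, x 1 / ε) * s, x 1, x 1 / ε))
          (fderiv ℝ h (x 0 - g (x 1, x 1 / ε) * t, x 1, x 1 / ε)
            (-(g (x 1, x 1 / ε)), 0, 0)) t := by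
        have ha : HasDerivAt (fun s : ℝ => x 0 - g (x 1, x 1 / ε) * s)
            (-(g (x 1, x 1 / ε))) t := by
          simpa using ((hasDerivAt_id t).const_mul (g (x 1, x 1 / ε))).const_sub (x 0)
        exact (hhd _).hasFDerivAt.comp_hasDerivAt t
          (ha.prodMk ((hasDerivAt_const t _).prodMk (hasDerivAt_const t _)))
      rw [hpz, Fin.sum_univ_three, hv0, hv1, hv2, hu2, hc, hd.deriv, (hF2 t x).fderiv]
      simp only [ContinuousLinearMap.comp_apply]
      have e0 : ((Lp0 - t • ((fderiv ℝ g (x 1, x 1 / ε)).comp (Lp1.prod (ε⁻¹ • Lp1)))).prod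
          (Lp1.prod (ε⁻¹ • Lp1))) (Pi.single 0 1) = ((1 : ℝ), (0 : ℝ), (0 : ℝ)) := by
        simp [hLp0, hLp1, Pi.single_apply, hDg0 x]
      have e2 : ((Lp0 - t • ((fderiv ℝ g (x 1, x 1 / ε)).comp (Lp1.prod (ε⁻¹ • Lp1)))).prod
          (Lp1.prod (ε⁻¹ • Lp1))) (Pi.single 2 1) = 0 := by
        simp [hLp0, hLp1, Pi.single_apply, hDg0 x, Prod.ext_iff]
      rw [e0, e2, map_zero]
      have hneg : ((-(g (x 1, x 1 / ε)), (0:ℝ), (0:ℝ)) : ℝ × ℝ × ℝ)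
          = -((g (x 1, x 1 / ε)) • ((1:ℝ), (0:ℝ), (0:ℝ))) := by
        simp [Prod.ext_iff]
      rw [hneg, map_neg, map_smul]
      simp [smul_eq_mul]
    fin_cases i
    · exact case0
    · exact case1
    · exact case2
  · intro t x
    rw [Fin.sum_univ_three, hu0, hu1, hu2, (hG x).fderiv, (hF2 t x).fderiv, fderiv_fun_const]
    simp only [ContinuousLinearMap.comp_apply]
    simp [hLp0, hLp1, Pi.single_apply, hDg0 x, Prod.ext_iff]
    rw [show (((0 : ℝ), (0 : ℝ), (0 : ℝ)) : ℝ × ℝ × ℝ) = 0 from rfl, map_zero]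
end

section
/- Let α ∈ (0,1), ε ∈ (0,1], let φ : ℝ^d → ℝ and U : ℝ^d × ℝ → ℝ^d be C¹ with U 1-periodic in θ, and set u^ε(x) = ε^α U(x, φ(x)/ε). Suppose there is a point (x₀, θ₀) and indices i ≠ j with m := |∂ⱼφ(x₀) ∂_θUⁱ(x₀,θ₀) − ∂ᵢφ(x₀) ∂_θUʲ(x₀,θ₀)| > 0. Then for every C > 0 there exists ε₁ ∈ (0,1] such that for all ε ∈ (0,ε₁], sup_x |∂ⱼ(u^ε)ⁱ(x) − ∂ᵢ(u^ε)ʲ(x)| ≥ C. More precisely sup_x |Ω^ε_{ij}(x)| ≥ (m/2) ε^{α−1} for ε small, so the vorticity blows up at rate ε^{α−1} as ε → 0 while ‖u^ε‖_{L^∞} = O(ε^α) → 0. -/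
/-!
At a point `x` where the phase `φ x / ε` is congruent to `θ₀` mod 1, periodicity of `U` and the
chain rule give `Ω^ε(x) = ε^(α-1) (F(x) + ε A(x))`, where `F` is the continuous function whose
value at `x₀` has modulus `m` and `A` is another continuous function. By continuity,
`|F(x) + ε A(x)| > m/2` for `x` near `x₀` and `ε` small. Since `fderiv φ x₀ ≠ 0`, `φ` is an open
map at `x₀`, so the image of that neighbourhood of `x₀` contains an interval around `φ x₀`, and
for `ε` small this interval meets the lattice `ε (θ₀ + ℤ)`. This produces, for every small `ε`,
a point where `|Ω^ε| ≥ (m/2) ε^(α-1)`, and `ε^(α-1) → ∞` because `α < 1`.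
-/

open Set Filter Topology

section

variable {E : Type*} [NormedAddCommGroup E] [NormedSpace ℝ E]
  {F : Type*} [NormedAddCommGroup F] [NormedSpace ℝ F] {ι : Type*} [Fintype ι]

lemma fderiv_apply_mk_add_intCast {U : E × ℝ → F} (hper : ∀ x θ, U (x, θ + 1) = U (x, θ))
    (x : E) (θ : ℝ) (k : ℤ) : fderiv ℝ U (x, θ + k) = fderiv ℝ U (x, θ) := by
  have hshift : (fun p : E × ℝ => U (p + (0, (k : ℝ)))) = U := by
    funext ⟨y, t⟩
    simpa using (show Function.Periodic (fun θ => U (y, θ)) 1 from hper y).int_mul k t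
  simpa [hshift] using (fderiv_comp_add_right (f := U) (x := (x, θ)) ((0 : E), (k : ℝ))).symm

lemma deriv_apply_mk_eq_fderiv {U : E × ℝ → ι → ℝ} {x : E} {θ : ℝ}
    (hU : DifferentiableAt ℝ U (x, θ)) (i : ι) :
    deriv (fun t => U (x, t) i) θ = fderiv ℝ U (x, θ) (0, 1) i := by
  have h := hU.hasFDerivAt.comp_hasDerivAt θ ((hasDerivAt_const θ x).prodMk (hasDerivAt_id θ))
  exact (hasDerivAt_pi.1 h i).deriv

lemma fderiv_const_mul_apply_comp_div {φ : E → ℝ} {U : E × ℝ → ι → ℝ} {x : E} {ε : ℝ}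
    (hφ : DifferentiableAt ℝ φ x) (hU : DifferentiableAt ℝ U (x, φ x / ε)) (c : ℝ) (i : ι)
    (w : E) :
    fderiv ℝ (fun y => c * U (y, φ y / ε) i) x w =
      c * (fderiv ℝ U (x, φ x / ε) (w, 0) i
        + fderiv ℝ φ x w / ε * fderiv ℝ U (x, φ x / ε) (0, 1) i) := by
  have hdiv : HasFDerivAt (fun y => φ y / ε) (ε⁻¹ • fderiv ℝ φ x) x := by
    simpa only [div_eq_mul_inv, mul_comm _ ε⁻¹] using hφ.hasFDerivAt.const_mul ε⁻¹
  have hgraph := (hasFDerivAt_id x).prodMk hdiv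
  have h : HasFDerivAt (fun y => c * U (y, φ y / ε) i) _ x :=
    ((hasFDerivAt_pi'.1 (hU.hasFDerivAt.comp x hgraph)) i).const_mul c
  rw [h.fderiv]
  generalize fderiv ℝ U (x, φ x / ε) = L
  have hsplit : ((w, ε⁻¹ • fderiv ℝ φ x w) : E × ℝ) = (w, 0) + (fderiv ℝ φ x w / ε) • (0, 1) := by
    simp [div_eq_inv_mul]
  change c * L (w, ε⁻¹ • fderiv ℝ φ x w) i = _
  rw [hsplit, map_add, map_smul]
  simp

lemma map_nhds_eq_of_fderiv_ne_zero [CompleteSpace E] {φ : E → ℝ} {x₀ : E}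
    (hφ : ContDiffAt ℝ 1 φ x₀) (h : fderiv ℝ φ x₀ ≠ 0) : map φ (𝓝 x₀) = 𝓝 (φ x₀) :=
  (hφ.hasStrictFDerivAt one_ne_zero).map_nhds_eq_of_surj
    (LinearMap.range_eq_top.mpr (LinearMap.surjective (ContinuousLinearMap.coe_injective.ne h)))

/-- At points `x` where `φ x / ε ≡ θ₀ (mod 1)`, the vorticity `∂_v (u^ε)ⁱ - ∂_w (u^ε)ʲ` of
`u^ε(y) = ε^α U(y, φ y / ε)` equals `ε^(α-1) * rescaledVorticity φ U θ₀ i j v w ε x`. -/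
noncomputable def rescaledVorticity (φ : E → ℝ) (U : E × ℝ → ι → ℝ) (θ₀ : ℝ) (i j : ι) (v w : E)
    (ε : ℝ) (x : E) : ℝ :=
  ε * (fderiv ℝ U (x, θ₀) (v, 0) i - fderiv ℝ U (x, θ₀) (w, 0) j)
    + (fderiv ℝ φ x v * fderiv ℝ U (x, θ₀) (0, 1) i
      - fderiv ℝ φ x w * fderiv ℝ U (x, θ₀) (0, 1) j)

lemma continuous_rescaledVorticity {φ : E → ℝ} {U : E × ℝ → ι → ℝ} (hφ : ContDiff ℝ 1 φ)
    (hU : ContDiff ℝ 1 U) (θ₀ : ℝ) (i j : ι) (v w : E) :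
    Continuous fun p : ℝ × E => rescaledVorticity φ U θ₀ i j v w p.1 p.2 := by
  have hφ' := hφ.continuous_fderiv one_ne_zero
  have hU' := hU.continuous_fderiv one_ne_zero
  unfold rescaledVorticity
  fun_prop

lemma fderiv_sub_fderiv_eq_rescaledVorticity {φ : E → ℝ} {U : E × ℝ → ι → ℝ}
    {x : E} {ε : ℝ} (hφ : DifferentiableAt ℝ φ x) (hU : DifferentiableAt ℝ U (x, φ x / ε))
    (hper : ∀ x θ, U (x, θ + 1) = U (x, θ)) (α : ℝ) (hε : ε ≠ 0) {θ₀ : ℝ} {k : ℤ}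
    (hx : φ x = ε * (θ₀ + k)) (i j : ι) (v w : E) :
    fderiv ℝ (fun y => ε ^ α * U (y, φ y / ε) i) x v
        - fderiv ℝ (fun y => ε ^ α * U (y, φ y / ε) j) x w
      = ε ^ (α - 1) * rescaledVorticity φ U θ₀ i j v w ε x := by
  have hphase : φ x / ε = θ₀ + k := by rw [hx, mul_div_cancel_left₀ _ hε]
  rw [fderiv_const_mul_apply_comp_div hφ hU, fderiv_const_mul_apply_comp_div hφ hU,
    hphase, fderiv_apply_mk_add_intCast hper, Real.rpow_sub_one hε, rescaledVorticity]
  field_simp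
  ring

lemma eventually_exists_mul_add_intCast_mem {t : Set ℝ} {y : ℝ} (ht : t ∈ 𝓝 y) (θ₀ : ℝ) :
    ∀ᶠ ε in 𝓝[>] 0, ∃ k : ℤ, ε * (θ₀ + k) ∈ t := by
  obtain ⟨η, hη, hball⟩ := Metric.mem_nhds_iff.1 ht
  filter_upwards [Ioo_mem_nhdsGT hη] with ε hε
  obtain ⟨k, hk, -⟩ := existsUnique_add_zsmul_mem_Ico hε.1 (ε * θ₀) y
  refine ⟨k, hball ?_⟩
  rw [Metric.mem_ball, Real.dist_eq, abs_lt]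
  simp only [zsmul_eq_mul, mem_Ico] at hk
  constructor <;> nlinarith [hε.2]

theorem eventually_exists_le_abs_fderiv_sub_fderiv [CompleteSpace E] {φ : E → ℝ}
    {U : E × ℝ → ι → ℝ} (hφ : ContDiff ℝ 1 φ) (hU : ContDiff ℝ 1 U)
    (hper : ∀ x θ, U (x, θ + 1) = U (x, θ)) {x₀ : E} (hφ₀ : fderiv ℝ φ x₀ ≠ 0) {θ₀ : ℝ}
    {i j : ι} {v w : E} {c : ℝ} (hc : c < |rescaledVorticity φ U θ₀ i j v w 0 x₀|) (α : ℝ) :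
    ∀ᶠ ε in 𝓝[>] 0, ∃ x, c * ε ^ (α - 1) ≤
      |fderiv ℝ (fun y => ε ^ α * U (y, φ y / ε) i) x v
        - fderiv ℝ (fun y => ε ^ α * U (y, φ y / ε) j) x w| := by
  have hnear : ∀ᶠ p in 𝓝 ((0 : ℝ), x₀), c < |rescaledVorticity φ U θ₀ i j v w p.1 p.2| :=
    ((continuous_rescaledVorticity hφ hU θ₀ i j v w).abs.tendsto _).eventually (lt_mem_nhds hc)
  rw [nhds_prod_eq, eventually_prod_iff] at hnear
  obtain ⟨small, hsmall, near, hnear_x₀, hbound⟩ := hnear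
  have himage : φ '' {x | near x} ∈ 𝓝 (φ x₀) := by
    rw [← map_nhds_eq_of_fderiv_ne_zero hφ.contDiffAt hφ₀]
    exact image_mem_map hnear_x₀
  filter_upwards [eventually_exists_mul_add_intCast_mem himage θ₀,
    nhdsWithin_le_nhds hsmall, self_mem_nhdsWithin] with ε ⟨k, x, hx, hφx⟩ hε (hpos : 0 < ε)
  refine ⟨x, ?_⟩
  rw [fderiv_sub_fderiv_eq_rescaledVorticity (hφ.differentiable one_ne_zero x)
    (hU.differentiable one_ne_zero _) hper α hpos.ne' hφx, abs_mul,
    abs_of_pos (Real.rpow_pos_of_pos hpos _), mul_comm]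
  exact mul_le_mul_of_nonneg_left (hbound hε hx).le (Real.rpow_nonneg hpos.le _)

end

lemma exists_Ioc_forall_of_eventually_nhdsGT {P : ℝ → Prop} (h : ∀ᶠ ε in 𝓝[>] 0, P ε) :
    ∃ ε₁ ∈ Ioc (0 : ℝ) 1, ∀ ε ∈ Ioc 0 ε₁, P ε := by
  obtain ⟨b, hb, hP⟩ := (nhdsGT_basis (0 : ℝ)).eventually_iff.1 h
  exact ⟨min (b / 2) 1, ⟨by positivity, min_le_right _ _⟩,
    fun ε hε => hP ⟨hε.1, hε.2.trans_lt ((min_le_left _ _).trans_lt (half_lt_self hb))⟩⟩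

theorem stmt_16_general {d : ℕ} (α : ℝ) (hα : α ∈ Set.Ioo (0:ℝ) 1)
    (φ : (Fin d → ℝ) → ℝ) (U : (Fin d → ℝ) × ℝ → Fin d → ℝ)
    (hφ : ContDiff ℝ 1 φ) (hU : ContDiff ℝ 1 U)
    (hper : ∀ x θ, U (x, θ + 1) = U (x, θ))
    (x₀ : Fin d → ℝ) (θ₀ : ℝ) (i j : Fin d)
    (hgrad : fderiv ℝ φ x₀ ≠ 0)
    (m : ℝ)
    (hm : m = |fderiv ℝ φ x₀ (Pi.single j 1) * deriv (fun θ => U (x₀, θ) i) θ₀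
              - fderiv ℝ φ x₀ (Pi.single i 1)
                  * deriv (fun θ => U (x₀, θ) j) θ₀|)
    (hm0 : 0 < m) :
    (∀ C > (0:ℝ), ∃ ε₁ ∈ Set.Ioc (0:ℝ) 1, ∀ ε ∈ Set.Ioc (0:ℝ) ε₁,
      ∃ x : Fin d → ℝ,
        C ≤ |fderiv ℝ (fun y => ε ^ α * U (y, φ y / ε) i) x (Pi.single j 1)
            - fderiv ℝ (fun y => ε ^ α * U (y, φ y / ε) j) x
                (Pi.single i 1)|) ∧
    (∃ ε₁ ∈ Set.Ioc (0:ℝ) 1, ∀ ε ∈ Set.Ioc (0:ℝ) ε₁,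
      ∃ x : Fin d → ℝ,
        (m / 2) * ε ^ (α - 1)
          ≤ |fderiv ℝ (fun y => ε ^ α * U (y, φ y / ε) i) x (Pi.single j 1)
            - fderiv ℝ (fun y => ε ^ α * U (y, φ y / ε) j) x
                (Pi.single i 1)|) := by
  have hm_eq : m = |rescaledVorticity φ U θ₀ i j (Pi.single j 1) (Pi.single i 1) 0 x₀| := by
    simp only [hm, rescaledVorticity, zero_mul, zero_add,
      deriv_apply_mk_eq_fderiv (hU.differentiable one_ne_zero _)]
  have hgrowth := eventually_exists_le_abs_fderiv_sub_fderiv hφ hU hper hgrad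
    (c := m / 2) (by rw [← hm_eq]; linarith) α
  refine ⟨fun C hC => exists_Ioc_forall_of_eventually_nhdsGT ?_,
    exists_Ioc_forall_of_eventually_nhdsGT hgrowth⟩
  have hlarge : ∀ᶠ ε in 𝓝[>] 0, 2 * C / m ≤ ε ^ (α - 1) :=
    (tendsto_rpow_neg_nhdsGT_zero (by linarith [hα.2])).eventually_ge_atTop _
  filter_upwards [hgrowth, hlarge] with ε ⟨x, hx⟩ hε
  refine ⟨x, le_trans ?_ hx⟩
  calc C = m / 2 * (2 * C / m) := by field_simp
    _ ≤ m / 2 * ε ^ (α - 1) := by gcongr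

/-- Quasi-singularities: for the oscillating family `u^ε(x) = ε^α U(x, φ(x)/ε)`
with a nondegenerate oscillation, the vorticity component `Ω^ε_{ij}` becomes
arbitrarily large as `ε → 0`, indeed at least `(m/2) ε^{α-1}` for `ε` small,
while `‖u^ε‖_{L^∞} = O(ε^α) → 0`. -/
theorem stmt_16 {d : ℕ} (α : ℝ) (hα : α ∈ Set.Ioo (0:ℝ) 1)
    (φ : (Fin d → ℝ) → ℝ) (U : (Fin d → ℝ) × ℝ → Fin d → ℝ)
    (hφ : ContDiff ℝ 1 φ) (hU : ContDiff ℝ 1 U)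
    (hper : ∀ x θ, U (x, θ + 1) = U (x, θ))
    (x₀ : Fin d → ℝ) (θ₀ : ℝ) (i j : Fin d) (hij : i ≠ j)
    (hgrad : fderiv ℝ φ x₀ ≠ 0)
    (m : ℝ)
    (hm : m = |fderiv ℝ φ x₀ (Pi.single j 1) * deriv (fun θ => U (x₀, θ) i) θ₀
              - fderiv ℝ φ x₀ (Pi.single i 1)
                  * deriv (fun θ => U (x₀, θ) j) θ₀|)
    (hm0 : 0 < m) :
    (∀ C > (0:ℝ), ∃ ε₁ ∈ Set.Ioc (0:ℝ) 1, ∀ ε ∈ Set.Ioc (0:ℝ) ε₁,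
      ∃ x : Fin d → ℝ,
        C ≤ |fderiv ℝ (fun y => ε ^ α * U (y, φ y / ε) i) x (Pi.single j 1)
            - fderiv ℝ (fun y => ε ^ α * U (y, φ y / ε) j) x
                (Pi.single i 1)|) ∧
    (∃ ε₁ ∈ Set.Ioc (0:ℝ) 1, ∀ ε ∈ Set.Ioc (0:ℝ) ε₁,
      ∃ x : Fin d → ℝ,
        (m / 2) * ε ^ (α - 1)
          ≤ |fderiv ℝ (fun y => ε ^ α * U (y, φ y / ε) i) x (Pi.single j 1)
            - fderiv ℝ (fun y => ε ^ α * U (y, φ y / ε) j) x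
                (Pi.single i 1)|) :=
  stmt_16_general α hα φ U hφ hU hper x₀ θ₀ i j hgrad m hm hm0
end

section
/- Let u₀ : [0,T] × ℝ^d → ℝ^d and Π : [0,T] × ℝ^d → ℝ^{d×d} be C¹ with Π(t,x) a projection matrix (Π² = Π) for all (t,x). Suppose W : [0,T] × ℝ^d → ℝ^d is C¹ and satisfies ∂ₜW + (u₀·∇)W = M W, where M W := (∂ₜΠ)W + ((u₀·∇)Π)W − Π (W·∇)u₀. If W(0,x) = Π(0,x)W(0,x) for all x, then W(t,x) = Π(t,x)W(t,x) for all (t,x) ∈ [0,T] × ℝ^d, provided the flow of u₀ is complete on [0,T]. -/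
/-!
Along a characteristic `γ` of `∂ₜ + u₀·∇`, write `P(s) = Π(s, γ s)` and `w(s) = W(s, γ s)`; the
transport equation becomes the ODE `w' = P'w − P b`. Differentiating `P² = P` gives
`P'P + PP' = P'`, and with it the defect `Z = w − Pw` satisfies the linear homogeneous ODE
`Z' = −P'Z`. Since `P'` is bounded on `[0, T]` and `Z(0) = 0`, Grönwall's inequality gives `Z ≡ 0`.
-/

open Set

namespace Matrix

variable {l m n : Type*}

theorem hasDerivAt_mul_apply [Fintype m] {P : ℝ → Matrix l m ℝ} {Q : ℝ → Matrix m n ℝ}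
    {P' : Matrix l m ℝ} {Q' : Matrix m n ℝ} {t : ℝ}
    (hP : ∀ i k, HasDerivAt (fun s => P s i k) (P' i k) t)
    (hQ : ∀ i k, HasDerivAt (fun s => Q s i k) (Q' i k) t) (i : l) (k : n) :
    HasDerivAt (fun s => (P s * Q s) i k) ((P' * Q t + P t * Q') i k) t := by
  simp only [mul_apply, add_apply, ← Finset.sum_add_distrib]
  exact HasDerivAt.fun_sum fun l _ => (hP i l).mul (hQ l k)

theorem hasDerivAt_mulVec [Fintype n] {P : ℝ → Matrix m n ℝ} {P' : Matrix m n ℝ}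
    {w : ℝ → n → ℝ} {w' : n → ℝ} {t : ℝ} (hP : ∀ i k, HasDerivAt (fun s => P s i k) (P' i k) t)
    (hw : HasDerivAt w w' t) :
    HasDerivAt (fun s => P s *ᵥ w s) (P' *ᵥ w t + P t *ᵥ w') t := by
  refine hasDerivAt_pi.2 fun i => ?_
  simp only [mulVec, dotProduct, Pi.add_apply, ← Finset.sum_add_distrib]
  exact HasDerivAt.fun_sum fun k _ => (hP i k).mul (hasDerivAt_pi.1 hw k)

theorem mul_add_mul_eq_of_hasDerivAt_of_mul_self [Fintype n] {P : ℝ → Matrix n n ℝ}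
    {P' : Matrix n n ℝ} {t : ℝ} (hidem : ∀ s, P s * P s = P s)
    (hP : ∀ i k, HasDerivAt (fun s => P s i k) (P' i k) t) :
    P' * P t + P t * P' = P' := by
  ext i k
  have h := hasDerivAt_mul_apply hP hP i k
  simp only [hidem] at h
  exact h.unique (hP i k)

/-- With `w' = P'w − Pb`, the derivative `w' − (P'w + Pw')` of the defect `w − Pw` is
`−P'(w − Pw)`. -/
theorem defect_transport_identity [Fintype n] {R : Type*} [CommRing R] {P P' : Matrix n n R}
    {w b : n → R} (hP : P * P = P) (hP' : P' * P + P * P' = P') :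
    (P' *ᵥ w - P *ᵥ b) - (P' *ᵥ w + P *ᵥ (P' *ᵥ w - P *ᵥ b)) = -(P' *ᵥ (w - P *ᵥ w)) := by
  have hPP' : P * P' = P' - P' * P := eq_sub_of_add_eq' hP'
  simp only [mulVec_sub, mulVec_mulVec, hP, hPP', sub_mulVec]
  abel

theorem exists_norm_mulVec_le [Fintype m] [Fintype n] {S : Set ℝ} (hS : IsCompact S)
    {A : ℝ → Matrix m n ℝ} (hA : ∀ i j, ContinuousOn (fun s => A s i j) S) :
    ∃ K, ∀ s ∈ S, ∀ v, ‖A s *ᵥ v‖ ≤ K * ‖v‖ := by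
  have hA' : ContinuousOn A S := continuousOn_pi.2 fun i => continuousOn_pi.2 (hA i)
  open scoped Matrix.Norms.Operator in
  obtain ⟨K, hK⟩ := hS.exists_bound_of_continuousOn hA'
  exact ⟨K, fun s hs v => (linfty_opNorm_mulVec _ _).trans
    (mul_le_mul_of_nonneg_right (hK s hs) (norm_nonneg _))⟩

theorem eq_mulVec_self_of_transport [Fintype n] {P P' : ℝ → Matrix n n ℝ} {w b : ℝ → n → ℝ}
    {T : ℝ} (hidem : ∀ s, P s * P s = P s)
    (hP : ∀ s ∈ Icc 0 T, ∀ i k, HasDerivAt (fun σ => P σ i k) (P' s i k) s)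
    (hP' : ∀ i k, ContinuousOn (fun s => P' s i k) (Icc 0 T))
    (hw : ∀ s ∈ Icc 0 T, HasDerivAt w (P' s *ᵥ w s - P s *ᵥ b s) s)
    (hinit : w 0 = P 0 *ᵥ w 0) :
    ∀ t ∈ Icc 0 T, w t = P t *ᵥ w t := by
  obtain ⟨K, hK⟩ := exists_norm_mulVec_le isCompact_Icc hP'
  have hZ : ∀ s ∈ Icc 0 T, HasDerivAt (fun σ => w σ - P σ *ᵥ w σ)
      (-(P' s *ᵥ (w s - P s *ᵥ w s))) s := by
    intro s hs
    rw [← defect_transport_identity (hidem s)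
      (mul_add_mul_eq_of_hasDerivAt_of_mul_self hidem (hP s hs))]
    exact (hw s hs).sub (hasDerivAt_mulVec (hP s hs) (hw s hs))
  have hzero := eq_zero_of_abs_deriv_le_mul_abs_self_of_eq_zero_right
    (fun s hs => (hZ s hs).continuousAt.continuousWithinAt)
    (fun s hs => (hZ s (Ico_subset_Icc_self hs)).hasDerivWithinAt) (sub_eq_zero.2 hinit)
    (fun s hs => by rw [norm_neg]; exact hK s (Ico_subset_Icc_self hs) _)
  exact fun t ht => sub_eq_zero.1 (hzero t ht)

end Matrix

section MaterialDerivative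

variable {ι : Type*} [Fintype ι] [DecidableEq ι]

/-- The material derivative `(∂ₜ + u·∇) f` at `(t, x)`. -/
noncomputable def materialDeriv (u : ℝ → (ι → ℝ) → ι → ℝ) (f : ℝ → (ι → ℝ) → ℝ) (t : ℝ)
    (x : ι → ℝ) : ℝ :=
  deriv (fun s => f s x) t + ∑ j, u t x j * fderiv ℝ (fun y => f t y) x (Pi.single j 1)

theorem ContinuousLinearMap.apply_eq_sum_mul_single (ℓ : (ι → ℝ) →L[ℝ] ℝ) (v : ι → ℝ) :
    ℓ v = ∑ j, v j * ℓ (Pi.single j 1) := by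
  conv_lhs => rw [pi_eq_sum_univ' v]
  simp [map_sum, map_smul]

theorem materialDeriv_eq_fderiv {u : ℝ → (ι → ℝ) → ι → ℝ} {f : ℝ → (ι → ℝ) → ℝ} {t : ℝ}
    {x : ι → ℝ} (hf : DifferentiableAt ℝ (fun q : ℝ × (ι → ℝ) => f q.1 q.2) (t, x)) :
    materialDeriv u f t x = fderiv ℝ (fun q : ℝ × (ι → ℝ) => f q.1 q.2) (t, x) (1, u t x) := by
  set L := fderiv ℝ (fun q : ℝ × (ι → ℝ) => f q.1 q.2) (t, x)
  have hline : HasDerivAt (fun s => ((s, x) : ℝ × (ι → ℝ))) (1, 0) t :=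
    (hasDerivAt_id t).prodMk (hasDerivAt_const t x)
  have hdt : deriv (fun s => f s x) t = L (1, 0) := by
    have h := hf.hasFDerivAt.comp_hasDerivAt t hline
    exact h.deriv
  have hdx : fderiv ℝ (fun y => f t y) x = L.comp (.inr ℝ ℝ (ι → ℝ)) :=
    (hf.hasFDerivAt.comp x ((hasFDerivAt_const t x).prodMk (hasFDerivAt_id x))).fderiv
  rw [materialDeriv, hdt, hdx, ← ContinuousLinearMap.apply_eq_sum_mul_single,
    ContinuousLinearMap.comp_apply, ← map_add]
  simp

theorem hasDerivAt_materialDeriv {u : ℝ → (ι → ℝ) → ι → ℝ} {f : ℝ → (ι → ℝ) → ℝ}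
    {γ : ℝ → ι → ℝ} {t : ℝ}
    (hf : DifferentiableAt ℝ (fun q : ℝ × (ι → ℝ) => f q.1 q.2) (t, γ t))
    (hγ : HasDerivAt γ (u t (γ t)) t) :
    HasDerivAt (fun s => f s (γ s)) (materialDeriv u f t (γ t)) t := by
  rw [materialDeriv_eq_fderiv hf]
  exact hf.hasFDerivAt.comp_hasDerivAt t ((hasDerivAt_id t).prodMk hγ)

theorem continuousOn_materialDeriv {u : ℝ → (ι → ℝ) → ι → ℝ} {f : ℝ → (ι → ℝ) → ℝ}
    {γ : ℝ → ι → ℝ} {S : Set ℝ} (hf : ContDiff ℝ 1 (fun q : ℝ × (ι → ℝ) => f q.1 q.2))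
    (hu : Continuous (fun q : ℝ × (ι → ℝ) => u q.1 q.2)) (hγ : ContinuousOn γ S) :
    ContinuousOn (fun s => materialDeriv u f s (γ s)) S := by
  have hgraph : ContinuousOn (fun s => (s, γ s)) S := continuousOn_id.prodMk hγ
  have heq : (fun s => materialDeriv u f s (γ s))
      = fun s => fderiv ℝ (fun q : ℝ × (ι → ℝ) => f q.1 q.2) (s, γ s) (1, u s (γ s)) :=
    funext fun s => materialDeriv_eq_fderiv (hf.differentiable one_ne_zero _)
  rw [heq]
  exact ((hf.continuous_fderiv one_ne_zero).comp_continuousOn hgraph).clm_apply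
    (continuousOn_const.prodMk (hu.comp_continuousOn hgraph))

end MaterialDerivative

theorem stmt_17_general {d : ℕ} (T : ℝ)
    (u₀ : ℝ → (Fin d → ℝ) → Fin d → ℝ)
    (hu₀ : ContDiff ℝ 1 (fun q : ℝ × (Fin d → ℝ) => u₀ q.1 q.2))
    (Pr : ℝ → (Fin d → ℝ) → Fin d → Fin d → ℝ)
    (hPr : ContDiff ℝ 1 (fun q : ℝ × (Fin d → ℝ) => Pr q.1 q.2))
    (hproj : ∀ t x (i k : Fin d), ∑ l, Pr t x i l * Pr t x l k = Pr t x i k)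
    (W : ℝ → (Fin d → ℝ) → Fin d → ℝ)
    (hW : ContDiff ℝ 1 (fun q : ℝ × (Fin d → ℝ) => W q.1 q.2))
    (htransport : ∀ t x (i : Fin d),
      deriv (fun s => W s x i) t
        + ∑ j, u₀ t x j * fderiv ℝ (fun y => W t y i) x (Pi.single j 1)
      = (∑ k, (deriv (fun s => Pr s x i k) t
            + ∑ j, u₀ t x j * fderiv ℝ (fun y => Pr t y i k) x (Pi.single j 1))
              * W t x k)
        - ∑ k, Pr t x i k
            * ∑ j, W t x j * fderiv ℝ (fun y => u₀ t y k) x (Pi.single j 1))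
    (hflow : ∀ t ∈ Set.Icc (0:ℝ) T, ∀ x : Fin d → ℝ,
      ∃ γ : ℝ → Fin d → ℝ, γ t = x ∧
        ∀ s ∈ Set.Icc (0:ℝ) T, HasDerivAt γ (u₀ s (γ s)) s)
    (hinit : ∀ x (i : Fin d), W 0 x i = ∑ k, Pr 0 x i k * W 0 x k) :
    ∀ t ∈ Set.Icc (0:ℝ) T, ∀ (x : Fin d → ℝ) (i : Fin d),
      W t x i = ∑ k, Pr t x i k * W t x k := by
  intro t ht x i
  obtain ⟨γ, rfl, hγ⟩ := hflow t ht x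
  have hWi (i) : ContDiff ℝ 1 (fun q : ℝ × (Fin d → ℝ) => W q.1 q.2 i) := contDiff_pi.1 hW i
  have hPrik (i k) : ContDiff ℝ 1 (fun q : ℝ × (Fin d → ℝ) => Pr q.1 q.2 i k) :=
    contDiff_pi.1 (contDiff_pi.1 hPr i) k
  have hγc : ContinuousOn γ (Icc 0 T) := fun s hs => (hγ s hs).continuousAt.continuousWithinAt
  refine congrFun (Matrix.eq_mulVec_self_of_transport (P := fun s => Pr s (γ s))
    (P' := fun s i k => materialDeriv u₀ (fun s y => Pr s y i k) s (γ s))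
    (w := fun s => W s (γ s))
    (b := fun s k => ∑ j, W s (γ s) j * fderiv ℝ (fun y => u₀ s y k) (γ s) (Pi.single j 1))
    (fun s => Matrix.ext (hproj s (γ s)))
    (fun s hs i k => hasDerivAt_materialDeriv (f := fun s y => Pr s y i k)
      ((hPrik i k).differentiable one_ne_zero _) (hγ s hs))
    (fun i k => continuousOn_materialDeriv (hPrik i k) hu₀.continuous hγc)
    (fun s hs => hasDerivAt_pi.2 fun i => ?_) (funext (hinit (γ 0))) t ht) i
  -- up to unfolding `materialDeriv` and `mulVec`, `htransport` is the ODE `w' = P'w − Pb`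
  exact (hasDerivAt_materialDeriv (f := fun s y => W s y i)
    ((hWi i).differentiable one_ne_zero _) (hγ s hs)).congr_deriv (htransport s (γ s) i)

/-- Conservation of the polarization condition `W = ΠW` along the transport
equation `∂ₜW + (u₀·∇)W = MW`, where
`MW = (∂ₜΠ)W + ((u₀·∇)Π)W − Π(W·∇)u₀`, provided the flow of `u₀` is
complete on `[0,T]` (every point lies on a characteristic defined on `[0,T]`).
The projection matrix `Π(t,x)` is written `Pr`, entrywise. -/
theorem stmt_17 {d : ℕ} (T : ℝ) (hT : 0 ≤ T)
    (u₀ : ℝ → (Fin d → ℝ) → Fin d → ℝ)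
    (hu₀ : ContDiff ℝ 1 (fun q : ℝ × (Fin d → ℝ) => u₀ q.1 q.2))
    (Pr : ℝ → (Fin d → ℝ) → Fin d → Fin d → ℝ)
    (hPr : ContDiff ℝ 1 (fun q : ℝ × (Fin d → ℝ) => Pr q.1 q.2))
    (hproj : ∀ t x (i k : Fin d), ∑ l, Pr t x i l * Pr t x l k = Pr t x i k)
    (W : ℝ → (Fin d → ℝ) → Fin d → ℝ)
    (hW : ContDiff ℝ 1 (fun q : ℝ × (Fin d → ℝ) => W q.1 q.2))
    (htransport : ∀ t x (i : Fin d),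
      deriv (fun s => W s x i) t
        + ∑ j, u₀ t x j * fderiv ℝ (fun y => W t y i) x (Pi.single j 1)
      = (∑ k, (deriv (fun s => Pr s x i k) t
            + ∑ j, u₀ t x j * fderiv ℝ (fun y => Pr t y i k) x (Pi.single j 1))
              * W t x k)
        - ∑ k, Pr t x i k
            * ∑ j, W t x j * fderiv ℝ (fun y => u₀ t y k) x (Pi.single j 1))
    (hflow : ∀ t ∈ Set.Icc (0:ℝ) T, ∀ x : Fin d → ℝ,
      ∃ γ : ℝ → Fin d → ℝ, γ t = x ∧
        ∀ s ∈ Set.Icc (0:ℝ) T, HasDerivAt γ (u₀ s (γ s)) s)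
    (hinit : ∀ x (i : Fin d), W 0 x i = ∑ k, Pr 0 x i k * W 0 x k) :
    ∀ t ∈ Set.Icc (0:ℝ) T, ∀ (x : Fin d → ℝ) (i : Fin d),
      W t x i = ∑ k, Pr t x i k * W t x k :=
  stmt_17_general T u₀ hu₀ Pr hPr hproj W hW htransport hflow hinit
end
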